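/- arXiv:1703.09915 — 2 statements merged into one kernel-verified Lean document; each statement's English description precedes it below -/
import Mathlib

section
/- In the formal power series ring M[[T]] over a commutative ring M containing an invertible element L, the element 1 − L^{−ν}T^{N} (for ν ∈ ℤ, N ≥ 1) is invertible, and the 'limit as T → ∞' functional, defined on the subring generated by products of terms L^{−ν}T^{N}/(1 − L^{−ν}T^{N}) by sending each such product of r factors to (−1)^r, is well-defined and M-linear. -/
open PowerSeries

/-- The term L^{-ν}T^N/(1 - L^{-ν}T^N) of the motivic zeta function,
realised via `Ring.inverse` in M[[T]]. -/
noncomputable def zetaTerm (M : Type*) [CommRing M] (L : Mˣ) (p : ℤ × ℕ) :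
    PowerSeries M :=
  PowerSeries.C (R := M) ((L ^ (-p.1) : Mˣ) : M) * PowerSeries.X ^ p.2 *
    Ring.inverse (1 - PowerSeries.C (R := M) ((L ^ (-p.1) : Mˣ) : M) * PowerSeries.X ^ p.2)

/-- The set of finite products of zeta terms (with exponents N ≥ 1). -/
def zetaProducts (M : Type*) [CommRing M] (L : Mˣ) : Set (PowerSeries M) :=
  {x | ∃ s : Multiset (ℤ × ℕ), (∀ p ∈ s, 1 ≤ p.2) ∧ x = (s.map (zetaTerm M L)).prod}


/-! The span of products of zeta terms consists of expansions of rational functions: it lies in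
the image of the localization of `R[T]` at the denominators `1 - u T^N`, which embeds into
`R⟦T⟧`. So every element has a unique rational-function preimage, and we may expand that
preimage in powers of `T⁻¹` instead and take the constant term, which is linear. Since
`u T^N / (1 - u T^N) = -1 / (1 - u⁻¹ T^{-N})` is a power series in `T⁻¹` with constant term
`-1`, a product of `r` zeta terms is sent to `(-1)^r`.
-/

namespace PowerSeries

variable {R : Type*} [CommRing R]

theorem constantCoeff_one_sub_C_mul_X_pow (c : R) {N : ℕ} (hN : 0 < N) :
    constantCoeff (1 - C c * X ^ N : R⟦X⟧) = 1 := by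
  simp [hN.ne']

theorem isUnit_one_sub_C_mul_X_pow (c : R) {N : ℕ} (hN : 0 < N) :
    IsUnit (1 - C c * X ^ N : R⟦X⟧) := by
  rw [isUnit_iff_constantCoeff, constantCoeff_one_sub_C_mul_X_pow c hN]
  exact isUnit_one

theorem constantCoeff_inverse_one_sub_C_mul_X_pow (c : R) {N : ℕ} (hN : 0 < N) :
    constantCoeff (Ring.inverse (1 - C c * X ^ N : R⟦X⟧)) = 1 := by
  have h := congrArg constantCoeff
    (Ring.inverse_mul_cancel _ (isUnit_one_sub_C_mul_X_pow c hN))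
  rwa [map_mul, constantCoeff_one_sub_C_mul_X_pow c hN, mul_one, map_one] at h

end PowerSeries

namespace LaurentSeries

open HahnSeries

variable {R : Type*} [CommRing R]

theorem coeff_zero_ofPowerSeries (f : R⟦X⟧) :
    (ofPowerSeries ℤ R f).coeff 0 = constantCoeff f := by
  simpa using ofPowerSeries_apply_coeff f 0

theorem algebraMap_eq_single (c : R) : algebraMap R (LaurentSeries R) c = single 0 c := by
  rw [HahnSeries.algebraMap_apply', PowerSeries.algebraMap_apply, Algebra.algebraMap_self,
    RingHom.id_apply, ofPowerSeries_C, HahnSeries.C_apply]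

theorem isUnit_single_unit (n : ℤ) (u : Rˣ) : IsUnit (single n (u : R) : LaurentSeries R) :=
  IsUnit.of_mul_eq_one (single (-n) ↑u⁻¹) (by simp [single_mul_single])

theorem one_sub_single_neg_eq (u : Rˣ) (N : ℕ) :
    (1 : LaurentSeries R) - single (-N : ℤ) (u : R)
      = single (-N : ℤ) (u : R) * ofPowerSeries ℤ R (C (↑u⁻¹ : R) * X ^ N - 1) := by
  simp [mul_sub, single_mul_single, ofPowerSeries_X_pow]

end LaurentSeries

namespace ZetaFraction

variable (R : Type*) [CommRing R]

noncomputable def denominators : Submonoid (Polynomial R) :=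
  Submonoid.closure
    {g | ∃ (u : Rˣ) (N : ℕ), 0 < N ∧ g = 1 - Polynomial.C (u : R) * Polynomial.X ^ N}

/-- The substitution `T ↦ T⁻¹`. -/
noncomputable def invSubst : Polynomial R →ₐ[R] LaurentSeries R :=
  Polynomial.aeval (HahnSeries.single (-1 : ℤ) (1 : R))

variable {R}

theorem invSubst_C_mul_X_pow (c : R) (N : ℕ) :
    invSubst R (Polynomial.C c * Polynomial.X ^ N) = HahnSeries.single (-N : ℤ) c := by
  simp [invSubst, HahnSeries.single_pow, HahnSeries.algebraMap_apply',
    HahnSeries.single_mul_single]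

theorem isUnit_of_mem_denominators {A : Type*} [CommRing A] [Algebra R A]
    (f : Polynomial R →ₐ[R] A)
    (hf : ∀ (u : Rˣ) (N : ℕ), 0 < N → IsUnit (f (1 - Polynomial.C (u : R) * Polynomial.X ^ N)))
    (g : denominators R) : IsUnit (f g) := by
  have hle : denominators R ≤ (IsUnit.submonoid A).comap (f : Polynomial R →* A) := by
    rw [denominators, Submonoid.closure_le]
    rintro _ ⟨u, N, hN, rfl⟩
    exact hf u N hN
  exact hle g.2

theorem isUnit_invSubst_one_sub_C_mul_X_pow (u : Rˣ) {N : ℕ} (hN : 0 < N) :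
    IsUnit (invSubst R (1 - Polynomial.C (u : R) * Polynomial.X ^ N)) := by
  rw [map_sub, map_one, invSubst_C_mul_X_pow, LaurentSeries.one_sub_single_neg_eq,
    ← neg_sub (1 : R⟦X⟧)]
  exact (LaurentSeries.isUnit_single_unit _ u).mul
    ((isUnit_one_sub_C_mul_X_pow (↑u⁻¹ : R) hN).neg.map (HahnSeries.ofPowerSeries ℤ R))

variable (R)

noncomputable def toPowerSeries : Localization (denominators R) →ₐ[R] R⟦X⟧ :=
  IsLocalization.liftAlgHom (f := Polynomial.coeToPowerSeries.algHom R)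
    (isUnit_of_mem_denominators _ fun u _ hN => by
      simpa using isUnit_one_sub_C_mul_X_pow (u : R) hN)

/-- Expansion of a fraction in powers of `T⁻¹`. -/
noncomputable def atInfinity : Localization (denominators R) →ₐ[R] LaurentSeries R :=
  IsLocalization.liftAlgHom (f := invSubst R)
    (isUnit_of_mem_denominators _ fun u _ hN => isUnit_invSubst_one_sub_C_mul_X_pow u hN)

theorem toPowerSeries_injective : Function.Injective (toPowerSeries R) := by
  rw [injective_iff_map_eq_zero]
  intro a ha
  obtain ⟨⟨f, g⟩, rfl⟩ := IsLocalization.mk'_surjective (denominators R) a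
  rw [toPowerSeries, IsLocalization.liftAlgHom_apply, IsLocalization.lift_mk'_spec,
    mul_zero] at ha
  have hf : f = 0 := Polynomial.coe_eq_zero_iff.mp (by simpa using ha)
  rw [hf]
  exact IsLocalization.mk'_zero _

/-- The fraction `u T^N / (1 - u T^N)`, with junk value `0` when `N = 0`. -/
noncomputable def fraction (u : Rˣ) (N : ℕ) : Localization (denominators R) :=
  if hN : 0 < N then
    IsLocalization.mk' _ (Polynomial.C (u : R) * Polynomial.X ^ N)
      (⟨1 - Polynomial.C (u : R) * Polynomial.X ^ N, Submonoid.subset_closure ⟨u, N, hN, rfl⟩⟩ :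
        denominators R)
  else 0

variable {R}

theorem toPowerSeries_fraction (u : Rˣ) {N : ℕ} (hN : 0 < N) :
    toPowerSeries R (fraction R u N)
      = PowerSeries.C (u : R) * X ^ N * Ring.inverse (1 - PowerSeries.C (u : R) * X ^ N) := by
  rw [fraction, dif_pos hN, toPowerSeries, IsLocalization.liftAlgHom_apply,
    IsLocalization.lift_mk'_spec]
  simp only [AlgHom.toRingHom_eq_coe, RingHom.coe_coe, Polynomial.coeToPowerSeries.algHom_apply,
    Algebra.algebraMap_self, map_id, id_eq, Polynomial.coe_sub, Polynomial.coe_one,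
    Polynomial.coe_mul, Polynomial.coe_C, Polynomial.coe_pow, Polynomial.coe_X]
  rw [mul_left_comm, Ring.mul_inverse_cancel _ (isUnit_one_sub_C_mul_X_pow _ hN), mul_one]

theorem atInfinity_fraction (u : Rˣ) {N : ℕ} (hN : 0 < N) :
    atInfinity R (fraction R u N)
      = HahnSeries.ofPowerSeries ℤ R (-Ring.inverse (1 - PowerSeries.C (↑u⁻¹ : R) * X ^ N)) := by
  rw [fraction, dif_pos hN, atInfinity, IsLocalization.liftAlgHom_apply,
    IsLocalization.lift_mk'_spec]
  change invSubst R _ = invSubst R _ * _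
  rw [map_sub, map_one, invSubst_C_mul_X_pow, LaurentSeries.one_sub_single_neg_eq, mul_assoc,
    ← map_mul, ← neg_sub (1 : R⟦X⟧), neg_mul_neg,
    Ring.mul_inverse_cancel _ (isUnit_one_sub_C_mul_X_pow _ hN), map_one, mul_one]

section Products

variable {ι : Type*} (s : Multiset ι) (u : ι → Rˣ) (N : ι → ℕ)

theorem toPowerSeries_prod_fraction (hN : ∀ i ∈ s, 0 < N i) :
    toPowerSeries R (s.map fun i => fraction R (u i) (N i)).prod
      = (s.map fun i => PowerSeries.C (u i : R) * X ^ N i *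
          Ring.inverse (1 - PowerSeries.C (u i : R) * X ^ N i)).prod := by
  rw [map_multiset_prod, Multiset.map_map]
  exact congrArg _ (Multiset.map_congr rfl fun i hi => toPowerSeries_fraction (u i) (hN i hi))

theorem coeff_zero_atInfinity_prod_fraction (hN : ∀ i ∈ s, 0 < N i) :
    (atInfinity R (s.map fun i => fraction R (u i) (N i)).prod).coeff 0
      = (-1 : R) ^ Multiset.card s := by
  have hvalue : s.map (atInfinity R ∘ fun i => fraction R (u i) (N i))
      = (s.map fun i => -Ring.inverse (1 - PowerSeries.C (↑(u i)⁻¹ : R) * X ^ N i)).map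
          (HahnSeries.ofPowerSeries ℤ R) := by
    rw [Multiset.map_map]
    exact Multiset.map_congr rfl fun i hi => atInfinity_fraction (u i) (hN i hi)
  have hconst : ∀ i ∈ s,
      constantCoeff (-Ring.inverse (1 - PowerSeries.C (↑(u i)⁻¹ : R) * X ^ N i)) = -1 :=
    fun i hi => by rw [map_neg, constantCoeff_inverse_one_sub_C_mul_X_pow _ (hN i hi)]
  rw [map_multiset_prod, Multiset.map_map, hvalue, ← map_multiset_prod,
    LaurentSeries.coeff_zero_ofPowerSeries, map_multiset_prod, Multiset.map_map,
    Function.comp_def, Multiset.map_congr rfl hconst, Multiset.map_const', Multiset.prod_replicate]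

end Products

variable (R) in
/-- The constant term of the expansion in powers of `T⁻¹`; it is well defined on power series
because `toPowerSeries` is injective. -/
noncomputable def limitAtInfinity : Subalgebra.toSubmodule (toPowerSeries R).range →ₗ[R] R where
  toFun f := (atInfinity R ((AlgEquiv.ofInjective _ (toPowerSeries_injective R)).symm f)).coeff 0
  map_add' _ _ := by simp only [map_add, HahnSeries.coeff_add]
  map_smul' c f := by
    rw [map_smul, Algebra.smul_def, map_mul, AlgHom.commutes, LaurentSeries.algebraMap_eq_single, HahnSeries.coeff_single_zero_mul, smul_eq_mul,
      RingHom.id_apply]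

theorem limitAtInfinity_apply_of_eq {x : Localization (denominators R)} {f : R⟦X⟧}
    (hx : toPowerSeries R x = f) (hf : f ∈ Subalgebra.toSubmodule (toPowerSeries R).range) :
    limitAtInfinity R ⟨f, hf⟩ = (atInfinity R x).coeff 0 := by
  subst hx
  simp only [limitAtInfinity, LinearMap.coe_mk, AddHom.coe_mk]
  congr
  rw [AlgEquiv.symm_apply_eq]
  rfl

end ZetaFraction

open ZetaFraction

theorem span_zetaProducts_le_range (M : Type*) [CommRing M] (L : Mˣ) :
    Submodule.span M (zetaProducts M L) ≤ Subalgebra.toSubmodule (toPowerSeries M).range := by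
  rw [Submodule.span_le]
  rintro _ ⟨s, hs, rfl⟩
  exact ⟨_, toPowerSeries_prod_fraction s (fun p => L ^ (-p.1)) Prod.snd hs⟩

/-- In M[[T]], 1 - L^{-ν}T^N is invertible for N ≥ 1, and the "limit as T → ∞"
functional, sending a product of r zeta terms to (-1)^r, is a well-defined
M-linear map on the span of such products. -/
theorem limit_functional_well_defined
    (M : Type*) [CommRing M] (L : Mˣ) :
    (∀ (ν : ℤ) (N : ℕ), 1 ≤ N →
      IsUnit (1 - PowerSeries.C (R := M) ((L ^ (-ν) : Mˣ) : M) * PowerSeries.X ^ N)) ∧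
    ∃ Φ : Submodule.span M (zetaProducts M L) →ₗ[M] M,
      ∀ (s : Multiset (ℤ × ℕ)) (_ : ∀ p ∈ s, 1 ≤ p.2)
        (hmem : (s.map (zetaTerm M L)).prod ∈ Submodule.span M (zetaProducts M L)),
        Φ ⟨(s.map (zetaTerm M L)).prod, hmem⟩ = (-1 : M) ^ (Multiset.card s) :=
  ⟨fun _ _ hN => isUnit_one_sub_C_mul_X_pow _ hN,
    (limitAtInfinity M).comp (Submodule.inclusion (span_zetaProducts_le_range M L)),
    fun s hs _ =>
      (limitAtInfinity_apply_of_eq (toPowerSeries_prod_fraction s _ Prod.snd hs) _).trans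
        (coeff_zero_atInfinity_prod_fraction s _ Prod.snd hs)⟩
end

section
/- Let d ≥ 1 and let f : ℝ^d → ℝ be a non-negative continuous weighted homogeneous polynomial (with positive weights and degree m > 0) vanishing only at the origin. Then for every ε > 0 the level set f⁻¹(ε) is homeomorphic to the sphere S^{d−1}. -/
/-!
Write `δ_t x = (t ^ w i * x i)ᵢ`. The map `x ↦ δ_{(ε / f x) ^ (1 / m)} x` sends the unit
sphere into `f⁻¹(ε)`. It is injective because `t ↦ ‖δ_t x‖` is strictly increasing for
`x ≠ 0`, so every scaling orbit meets the sphere at most once, and surjective because by the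
intermediate value theorem every orbit does meet the sphere. A continuous bijection from the
compact sphere onto the Hausdorff level set is a homeomorphism.
-/

open Metric Set Function

variable {d : ℕ}

noncomputable def weightedDilation (w : Fin d → ℝ) (t : ℝ) (x : EuclideanSpace ℝ (Fin d)) :
    EuclideanSpace ℝ (Fin d) :=
  WithLp.toLp 2 fun i => t ^ w i * x i

section WeightedDilation

variable {w : Fin d → ℝ} {s t : ℝ} {x y : EuclideanSpace ℝ (Fin d)}

@[simp]
theorem weightedDilation_apply (i : Fin d) : weightedDilation w t x i = t ^ w i * x i := rfl

@[simp]
theorem weightedDilation_one : weightedDilation w 1 x = x := by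
  ext i; simp

theorem weightedDilation_zero (hw : ∀ i, 0 < w i) : weightedDilation w 0 x = 0 := by
  ext i; simp [Real.zero_rpow (hw i).ne']

theorem weightedDilation_mul (hs : 0 ≤ s) (ht : 0 ≤ t) :
    weightedDilation w (s * t) x = weightedDilation w s (weightedDilation w t x) := by
  ext i; simp [Real.mul_rpow hs ht, mul_assoc]

theorem Continuous.weightedDilation {X : Type*} [TopologicalSpace X] {T : X → ℝ}
    {g : X → EuclideanSpace ℝ (Fin d)} (hw : ∀ i, 0 ≤ w i) (hT : Continuous T)
    (hg : Continuous g) : Continuous fun a => weightedDilation w (T a) (g a) :=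
  (PiLp.continuous_toLp 2 _).comp <| continuous_pi fun i =>
    (hT.rpow_const fun _ => Or.inr (hw i)).mul ((PiLp.continuous_apply 2 _ i).comp hg)

theorem strictMonoOn_norm_weightedDilation (hw : ∀ i, 0 < w i) (hx : x ≠ 0) :
    StrictMonoOn (fun t => ‖weightedDilation w t x‖) (Ici 0) := by
  intro s hs t ht hst
  obtain ⟨j, hj⟩ : ∃ j, x j ≠ 0 := by
    by_contra! h; exact hx (PiLp.ext h)
  have hsq : ‖weightedDilation w s x‖ ^ 2 < ‖weightedDilation w t x‖ ^ 2 := by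
    simp only [EuclideanSpace.real_norm_sq_eq, weightedDilation_apply, mul_pow]
    refine Finset.sum_lt_sum (fun i _ => ?_) ⟨j, Finset.mem_univ j, ?_⟩
    · gcongr
      exacts [Real.rpow_nonneg hs _, (hw i).le]
    · gcongr
      exacts [Real.rpow_nonneg hs _, hw j]
  exact lt_of_pow_lt_pow_left₀ 2 (norm_nonneg _) hsq

theorem exists_norm_weightedDilation_eq_one (hw : ∀ i, 0 < w i) (hx : x ≠ 0) :
    ∃ s, 0 < s ∧ ‖weightedDilation w s x‖ = 1 := by
  obtain ⟨j, hj⟩ : ∃ j, x j ≠ 0 := by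
    by_contra! h; exact hx (PiLp.ext h)
  -- at `b = |x j|^(-1/w j)` the `j`-th coordinate alone has absolute value `1`
  set b := |x j|⁻¹ ^ (w j)⁻¹
  have hb : 0 ≤ b := by positivity
  have hb_one : 1 ≤ ‖weightedDilation w b x‖ := by
    have hbw : b ^ w j = |x j|⁻¹ := by
      rw [← Real.rpow_mul (by positivity), inv_mul_cancel₀ (hw j).ne', Real.rpow_one]
    calc (1 : ℝ) = ‖weightedDilation w b x j‖ := by
          rw [weightedDilation_apply, Real.norm_eq_abs, abs_mul, abs_of_nonneg (by positivity),
            hbw, inv_mul_cancel₀ (abs_pos.2 hj).ne']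
      _ ≤ ‖weightedDilation w b x‖ := PiLp.norm_apply_le _ j
  have hcont : Continuous fun t => ‖weightedDilation w t x‖ :=
    (continuous_id.weightedDilation (fun i => (hw i).le) continuous_const).norm
  obtain ⟨s, hs, hs_one⟩ := intermediate_value_Icc hb hcont.continuousOn
    ⟨by simp [weightedDilation_zero hw], hb_one⟩
  refine ⟨s, hs.1.lt_of_ne ?_, hs_one⟩
  rintro rfl
  simp [weightedDilation_zero hw] at hs_one

theorem eq_of_weightedDilation_eq_of_norm_eq_one (hw : ∀ i, 0 < w i) (hx : ‖x‖ = 1)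
    (hy : ‖y‖ = 1) (hs : 0 < s) (ht : 0 < t)
    (hxy : weightedDilation w s x = weightedDilation w t y) : x = y := by
  have hyx : y = weightedDilation w (t⁻¹ * s) x := by
    rw [weightedDilation_mul (inv_pos.2 ht).le hs.le, hxy,
      ← weightedDilation_mul (inv_pos.2 ht).le ht.le, inv_mul_cancel₀ ht.ne',
      weightedDilation_one]
  have hx0 : x ≠ 0 := by rintro rfl; simp at hx
  have hst : t⁻¹ * s = 1 := by
    refine (strictMonoOn_norm_weightedDilation hw hx0).injOn (mul_pos (inv_pos.2 ht) hs).le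
      (mem_Ici.2 zero_le_one) ?_
    simp only [weightedDilation_one, hx, ← hyx, hy]
  rw [hyx, hst, weightedDilation_one]

end WeightedDilation

section WeightedHomogeneous

variable {w : Fin d → ℝ} {f : EuclideanSpace ℝ (Fin d) → ℝ} {m : ℝ}
  {x y : EuclideanSpace ℝ (Fin d)}

theorem apply_weightedDilation_rpow_div_eq
    (hhom : ∀ t : ℝ, 0 < t → ∀ x, f (weightedDilation w t x) = t ^ m * f x) (hm : m ≠ 0)
    {ε : ℝ} (hε : 0 < ε) (hx : 0 < f x) :
    f (weightedDilation w ((ε / f x) ^ m⁻¹) x) = ε := by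
  rw [hhom _ (by positivity), ← Real.rpow_mul (by positivity), inv_mul_cancel₀ hm,
    Real.rpow_one, div_mul_cancel₀ _ hx.ne']

theorem exists_mem_sphere_weightedDilation_rpow_div_eq (hw : ∀ i, 0 < w i)
    (hhom : ∀ t : ℝ, 0 < t → ∀ x, f (weightedDilation w t x) = t ^ m * f x) (hm : m ≠ 0)
    (hy : y ≠ 0) (hfy : 0 < f y) :
    ∃ x ∈ sphere (0 : EuclideanSpace ℝ (Fin d)) 1,
      weightedDilation w ((f y / f x) ^ m⁻¹) x = y := by
  obtain ⟨s, hs, hs_one⟩ := exists_norm_weightedDilation_eq_one hw hy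
  refine ⟨weightedDilation w s y, mem_sphere_zero_iff_norm.2 hs_one, ?_⟩
  have hscale : (f y / f (weightedDilation w s y)) ^ m⁻¹ = s⁻¹ := by
    rw [hhom s hs, div_mul_cancel_right₀ hfy.ne', Real.inv_rpow (by positivity),
      ← Real.rpow_mul hs.le, mul_inv_cancel₀ hm, Real.rpow_one]
  rw [hscale, ← weightedDilation_mul (inv_pos.2 hs).le hs.le, inv_mul_cancel₀ hs.ne',
    weightedDilation_one]

end WeightedHomogeneous

theorem level_set_homeomorphic_sphere_general
    (d : ℕ)
    (f : EuclideanSpace ℝ (Fin d) → ℝ)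
    (hcont : Continuous f)
    (hnonneg : ∀ x, 0 ≤ f x)
    (hzero : ∀ x, f x = 0 ↔ x = 0)
    (w : Fin d → ℝ) (hw : ∀ i, 0 < w i) (m : ℝ) (hm : 0 < m)
    (hhom : ∀ t : ℝ, 0 < t → ∀ x : EuclideanSpace ℝ (Fin d),
      f (WithLp.toLp 2 (fun i => t ^ (w i) * x i)) = t ^ m * f x) :
    ∀ ε : ℝ, 0 < ε →
      Nonempty ((f ⁻¹' {ε}) ≃ₜ Metric.sphere (0 : EuclideanSpace ℝ (Fin d)) 1) := by
  intro ε hε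
  have hpos (x : sphere (0 : EuclideanSpace ℝ (Fin d)) 1) : 0 < f x :=
    (hnonneg x).lt_of_ne' (mt (hzero x).1 (ne_zero_of_mem_unit_sphere x))
  let G : sphere (0 : EuclideanSpace ℝ (Fin d)) 1 → f ⁻¹' {ε} := fun x =>
    ⟨weightedDilation w ((ε / f x) ^ m⁻¹) x,
      apply_weightedDilation_rpow_div_eq hhom hm.ne' hε (hpos x)⟩
  have hscale_cont : Continuous fun x : sphere (0 : EuclideanSpace ℝ (Fin d)) 1 =>
      (ε / f x) ^ m⁻¹ :=
    (continuous_const.div (hcont.comp continuous_subtype_val) fun x =>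
      (hpos x).ne').rpow_const fun _ => Or.inr (inv_pos.2 hm).le
  have hG_cont : Continuous G :=
    (hscale_cont.weightedDilation (fun i => (hw i).le) continuous_subtype_val).subtype_mk _
  have hG_inj : Injective G := fun x y hxy =>
    Subtype.ext <| eq_of_weightedDilation_eq_of_norm_eq_one hw (norm_eq_of_mem_sphere x)
      (norm_eq_of_mem_sphere y) (Real.rpow_pos_of_pos (div_pos hε (hpos x)) _)
      (Real.rpow_pos_of_pos (div_pos hε (hpos y)) _) (congrArg Subtype.val hxy)
  have hG_surj : Surjective G := by
    rintro ⟨y, rfl : f y = ε⟩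
    have hy0 : y ≠ 0 := by rintro rfl; exact hε.ne' ((hzero 0).2 rfl)
    obtain ⟨x, hx, hxy⟩ := exists_mem_sphere_weightedDilation_rpow_div_eq hw hhom hm.ne' hy0 hε
    exact ⟨⟨x, hx⟩, Subtype.ext hxy⟩
  exact ⟨(hG_cont.homeoOfEquivCompactToT2
    (f := Equiv.ofBijective G ⟨hG_inj, hG_surj⟩)).symm⟩

/-- A non-negative continuous weighted homogeneous polynomial function (positive
weights, degree m > 0) on ℝ^d vanishing only at the origin has all its positive
level sets homeomorphic to the sphere S^{d-1}. -/
theorem level_set_homeomorphic_sphere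
    (d : ℕ) (hd : 1 ≤ d) (P : MvPolynomial (Fin d) ℝ)
    (f : EuclideanSpace ℝ (Fin d) → ℝ)
    (hf : ∀ x, f x = MvPolynomial.eval (fun i => x i) P)
    (hcont : Continuous f)
    (hnonneg : ∀ x, 0 ≤ f x)
    (hzero : ∀ x, f x = 0 ↔ x = 0)
    (w : Fin d → ℝ) (hw : ∀ i, 0 < w i) (m : ℝ) (hm : 0 < m)
    (hhom : ∀ t : ℝ, 0 < t → ∀ x : EuclideanSpace ℝ (Fin d),
      f (WithLp.toLp 2 (fun i => t ^ (w i) * x i)) = t ^ m * f x) :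
    ∀ ε : ℝ, 0 < ε →
      Nonempty ((f ⁻¹' {ε}) ≃ₜ Metric.sphere (0 : EuclideanSpace ℝ (Fin d)) 1) :=
  level_set_homeomorphic_sphere_general d f hcont hnonneg hzero w hw m hm hhom
end
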